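/- Let S be a nonempty finite set with |S| ≥ 2, p ≥ 2 an integer, and q : S × S^p → [0,1] a conditional probability mass function (Σ_{ξ∈S} q(ξ|b) = 1 for every b ∈ S^p). Define the block kernel K ∈ ℝ^{S^p×S^p} by K_{b,b'} := q(b'₁|b) if (b'₂,…,b'_p) = (b₁,…,b_{p−1}) and K_{b,b'} := 0 otherwise. Then for every integer r with 1 ≤ r < p, the Dobrushin ergodicity coefficient satisfies τ₁(K^r) = 1. -/
import Mathlib


open Finset

/-- The Dobrushin ergodicity coefficient of a matrix `P`. -/
noncomputable def tau1 {T : Type*} [Fintype T] (P : Matrix T T ℝ) : ℝ :=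
  sSup {r : ℝ | ∃ u : T → ℝ, u ≠ 0 ∧ (∑ x, u x) = 0 ∧
    r = (∑ x, |Matrix.vecMul u P x|) / (∑ x, |u x|)}

open Classical in
/-- The block kernel of a `p`-Markov process with conditional pmf `q`: histories are
listed most recent first, and a transition shifts the history by one, appending the
new symbol at the front. -/
noncomputable def blockKernel {S : Type*} [Fintype S] (p : ℕ) (hp : 0 < p)
    (q : S → (Fin p → S) → ℝ) : Matrix (Fin p → S) (Fin p → S) ℝ :=
  fun b b' =>
    if ∀ (j : Fin p), ∀ _h : (j : ℕ) < p - 1, b' ⟨(j : ℕ) + 1, by omega⟩ = b j then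
      q (b' ⟨0, hp⟩) b
    else 0

section Aux

variable {S : Type*} [Fintype S] [DecidableEq S]

/-- Extend a history `b` by a new symbol `ξ` at the front, dropping the last symbol. -/
noncomputable def bkExt (p : ℕ) (b : Fin p → S) (ξ : S) : Fin p → S :=
  fun j => if _h : (j : ℕ) = 0 then ξ else b ⟨(j : ℕ) - 1, by omega⟩

lemma bk_nonneg (p : ℕ) (hp : 0 < p) (q : S → (Fin p → S) → ℝ)
    (hq0 : ∀ ξ b, 0 ≤ q ξ b) (b b' : Fin p → S) :
    0 ≤ blockKernel p hp q b b' := by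
  unfold blockKernel
  split
  · exact hq0 _ _
  · exact le_refl 0

lemma bkpow_nonneg (p : ℕ) (hp : 0 < p) (q : S → (Fin p → S) → ℝ)
    (hq0 : ∀ ξ b, 0 ≤ q ξ b) (s : ℕ) (b c : Fin p → S) :
    0 ≤ (blockKernel p hp q ^ s) b c := by
  induction s generalizing b c with
  | zero =>
    rw [pow_zero, Matrix.one_apply]
    split <;> norm_num
  | succ n ih =>
    rw [pow_succ, Matrix.mul_apply]
    exact Finset.sum_nonneg fun m _ => mul_nonneg (ih b m) (bk_nonneg p hp q hq0 m c)

lemma bk_apply_ext (p : ℕ) (hp : 0 < p) (q : S → (Fin p → S) → ℝ)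
    (b : Fin p → S) (ξ : S) :
    blockKernel p hp q b (bkExt p b ξ) = q ξ b := by
  unfold blockKernel bkExt
  rw [if_pos]
  · simp
  · intro j hj
    simp only
    rw [dif_neg (by omega)]
    congr 1

lemma bk_support (p : ℕ) (hp : 0 < p) (q : S → (Fin p → S) → ℝ)
    (b b' : Fin p → S) (h : blockKernel p hp q b b' ≠ 0) :
    b' = bkExt p b (b' ⟨0, hp⟩) := by
  unfold blockKernel at h
  split_ifs at h with hc
  swap
  · exact absurd rfl h
  funext i
  unfold bkExt
  by_cases hi : (i : ℕ) = 0
  · rw [dif_pos hi]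
    have : i = ⟨0, hp⟩ := Fin.ext hi
    rw [this]
  · rw [dif_neg hi]
    have hip : (i : ℕ) < p := i.isLt
    have hlt : (i : ℕ) - 1 < p - 1 := by omega
    have := hc ⟨(i : ℕ) - 1, by omega⟩ hlt
    simp only at this
    rw [← this]
    congr 1
    exact Fin.ext (by simp; omega)

lemma bk_rowsum (p : ℕ) (hp : 0 < p) (q : S → (Fin p → S) → ℝ)
    (hqsum : ∀ b, (∑ ξ : S, q ξ b) = 1) (b : Fin p → S) :
    ∑ b', blockKernel p hp q b b' = 1 := by
  have hinj : Function.Injective (bkExt p b) := by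
    intro ξ ξ' h
    have := congrFun h ⟨0, hp⟩
    simpa [bkExt] using this
  have key : ∑ b', blockKernel p hp q b b' = ∑ ξ : S, blockKernel p hp q b (bkExt p b ξ) := by
    rw [← Finset.sum_image (f := fun b' => blockKernel p hp q b b')
      (g := bkExt p b) (fun x _ y _ h => hinj h)]
    refine (Finset.sum_subset (Finset.subset_univ _) ?_).symm
    intro b' _ hb'
    by_contra h
    exact hb' (Finset.mem_image.mpr
      ⟨b' ⟨0, hp⟩, Finset.mem_univ _, (bk_support p hp q b b' h).symm⟩)
  rw [key]
  simp only [bk_apply_ext]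
  exact hqsum b

lemma bkpow_rowsum (p : ℕ) (hp : 0 < p) (q : S → (Fin p → S) → ℝ)
    (hqsum : ∀ b, (∑ ξ : S, q ξ b) = 1) (s : ℕ) (b : Fin p → S) :
    ∑ c, (blockKernel p hp q ^ s) b c = 1 := by
  induction s generalizing b with
  | zero => simp [Matrix.one_apply]
  | succ n ih =>
    simp only [pow_succ, Matrix.mul_apply]
    rw [Finset.sum_comm]
    simp_rw [← Finset.mul_sum, bk_rowsum p hp q hqsum, mul_one]
    exact ih b

lemma bkpow_shift (p : ℕ) (hp : 0 < p) (q : S → (Fin p → S) → ℝ) (s : ℕ) :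
    ∀ b c : Fin p → S, (blockKernel p hp q ^ s) b c ≠ 0 →
      ∀ (j : ℕ) (hj : j + s < p), c ⟨j + s, hj⟩ = b ⟨j, by omega⟩ := by
  induction s with
  | zero =>
    intro b c h j hj
    rw [pow_zero, Matrix.one_apply] at h
    have hbc : b = c := by
      by_contra hbc
      exact h (if_neg hbc)
    subst hbc
    rfl
  | succ n ih =>
    intro b c h j hj
    rw [pow_succ, Matrix.mul_apply] at h
    obtain ⟨m, hm⟩ : ∃ m, (blockKernel p hp q ^ n) b m * blockKernel p hp q m c ≠ 0 := by
      by_contra hall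
      push_neg at hall
      exact h (Finset.sum_eq_zero fun m _ => hall m)
    have h1 : (blockKernel p hp q ^ n) b m ≠ 0 := left_ne_zero_of_mul hm
    have h2 : blockKernel p hp q m c ≠ 0 := right_ne_zero_of_mul hm
    unfold blockKernel at h2
    split_ifs at h2 with hc
    swap
    · exact absurd rfl h2
    have hjm : j + n < p := by omega
    have hmb := ih b m h1 j hjm
    have hlt : j + n < p - 1 := by omega
    have hstep := hc ⟨j + n, hjm⟩ hlt
    simp only at hstep
    have : (⟨j + (n + 1), hj⟩ : Fin p) = ⟨(j + n) + 1, by omega⟩ := rfl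
    rw [this]
    exact hstep.trans hmb

end Aux

/-- for `|S| ≥ 2`, `p ≥ 2` and `1 ≤ r < p`, the Dobrushin ergodicity
coefficient of the `r`-step block kernel is trivially `1`. -/
theorem stmt9 {S : Type*} [Fintype S] [DecidableEq S] (hS : 2 ≤ Fintype.card S)
    (p : ℕ) (hp2 : 2 ≤ p) (hp : 0 < p)
    (q : S → (Fin p → S) → ℝ)
    (hq0 : ∀ ξ b, 0 ≤ q ξ b) (hq1 : ∀ ξ b, q ξ b ≤ 1)
    (hqsum : ∀ b, (∑ ξ : S, q ξ b) = 1)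
    (r : ℕ) (hr1 : 1 ≤ r) (hrp : r < p) :
    tau1 (blockKernel p hp q ^ r) = 1 := by
  classical
  set K : Matrix (Fin p → S) (Fin p → S) ℝ := blockKernel p hp q ^ r with hKdef
  have hKnn : ∀ b c, 0 ≤ K b c := fun b c => bkpow_nonneg p hp q hq0 r b c
  have hKrow : ∀ b, ∑ c, K b c = 1 := fun b => bkpow_rowsum p hp q hqsum r b
  -- two histories differing in their 0-th coordinate
  obtain ⟨a₀, a₁, hne⟩ := Fintype.exists_pair_of_one_lt_card (by omega : 1 < Fintype.card S)
  set b : Fin p → S := fun _ => a₀ with hbdef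
  set b' : Fin p → S := fun j => if (j : ℕ) = 0 then a₁ else a₀ with hb'def
  have hbb' : b ≠ b' := by
    intro h
    have := congrFun h ⟨0, hp⟩
    simp [hbdef, hb'def] at this
    exact hne this
  set u : (Fin p → S) → ℝ :=
    fun x => (if x = b then (1 : ℝ) else 0) - (if x = b' then 1 else 0) with hudef
  have hub : u b = 1 := by simp [hudef, hbb']
  have hu0 : u ≠ 0 := by
    intro h
    have := congrFun h b
    rw [hub] at this
    norm_num at this
  have husum : (∑ x, u x) = 0 := by
    simp [hudef, Finset.sum_sub_distrib]
  have huabs : (∑ x, |u x|) = 2 := by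
    have : ∀ x, |u x| = (if x = b then (1 : ℝ) else 0) + (if x = b' then 1 else 0) := by
      intro x
      by_cases h1 : x = b
      · subst h1
        simp [hudef, hbb']
      · by_cases h2 : x = b'
        · subst h2
          simp [hudef, Ne.symm hbb']
        · simp [hudef, h1, h2]
    simp only [this, Finset.sum_add_distrib]
    simp
    norm_num
  have hvm : ∀ x, Matrix.vecMul u K x = K b x - K b' x := by
    intro x
    simp only [Matrix.vecMul, dotProduct, hudef, sub_mul, ite_mul, one_mul, zero_mul,
      Finset.sum_sub_distrib]
    rw [Finset.sum_ite_eq' Finset.univ b (fun y => K y x),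
      Finset.sum_ite_eq' Finset.univ b' (fun y => K y x)]
    simp
  have hdisj : ∀ x, K b x = 0 ∨ K b' x = 0 := by
    intro x
    by_contra hcon
    push_neg at hcon
    have h1 := bkpow_shift p hp q r b x hcon.1 0 (by omega)
    have h2 := bkpow_shift p hp q r b' x hcon.2 0 (by omega)
    simp only [hbdef, hb'def] at h1 h2
    simp at h1 h2
    exact hne (h1.symm.trans h2)
  have hnum : (∑ x, |Matrix.vecMul u K x|) = 2 := by
    have habs : ∀ x, |Matrix.vecMul u K x| = K b x + K b' x := by
      intro x
      rw [hvm x]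
      rcases hdisj x with h | h
      · rw [h, zero_sub, abs_neg, abs_of_nonneg (hKnn b' x), zero_add]
      · rw [h, sub_zero, abs_of_nonneg (hKnn b x), add_zero]
    simp only [habs, Finset.sum_add_distrib, hKrow]
    norm_num
  have h1mem : (1 : ℝ) ∈ {t : ℝ | ∃ u : (Fin p → S) → ℝ, u ≠ 0 ∧ (∑ x, u x) = 0 ∧
      t = (∑ x, |Matrix.vecMul u K x|) / (∑ x, |u x|)} := by
    exact ⟨u, hu0, husum, by rw [hnum, huabs]; norm_num⟩
  have hubd : ∀ t ∈ {t : ℝ | ∃ u : (Fin p → S) → ℝ, u ≠ 0 ∧ (∑ x, u x) = 0 ∧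
      t = (∑ x, |Matrix.vecMul u K x|) / (∑ x, |u x|)}, t ≤ 1 := by
    rintro t ⟨v, hv0, _, rfl⟩
    obtain ⟨x₀, hx₀⟩ := Function.ne_iff.mp hv0
    have hD : 0 < ∑ x, |v x| :=
      Finset.sum_pos' (fun y _ => abs_nonneg _)
        ⟨x₀, Finset.mem_univ _, abs_pos.mpr hx₀⟩
    rw [div_le_one hD]
    calc ∑ x, |Matrix.vecMul v K x|
        ≤ ∑ x, ∑ y, |v y| * K y x := by
          refine Finset.sum_le_sum fun x _ => ?_
          refine (Finset.abs_sum_le_sum_abs _ _).trans (le_of_eq ?_)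
          refine Finset.sum_congr rfl fun y _ => ?_
          rw [abs_mul, abs_of_nonneg (hKnn y x)]
      _ = ∑ y, |v y| * ∑ x, K y x := by
          rw [Finset.sum_comm]
          simp_rw [Finset.mul_sum]
      _ = ∑ y, |v y| := by simp_rw [hKrow, mul_one]
  exact le_antisymm (csSup_le ⟨1, h1mem⟩ hubd) (le_csSup ⟨1, hubd⟩ h1mem)
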